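/- arXiv:2403.16500 — 3 statements merged into one kernel-verified Lean document; each statement's English description precedes it below -/
import Mathlib

section
/- Let G and G' be locally compact groups. Suppose G has property (TTT) and there exists a proper wq-cocycle (b', π') on G', i.e., a wq-cocycle such that for every n ∈ ℕ the set {g ∈ G' : ‖b'(g)‖ ≤ n} is relatively compact in G'. Then every quasi-homomorphism φ : G → G' has relatively compact image. -/
/-!
Pulling a proper wq-cocycle `(b', π')` of `G'` back along a quasi-homomorphism `φ` gives a
wq-cocycle `(b' ∘ φ, π' ∘ φ)` of `G`: since `φ g * φ h = φ (g * h) * d` with `d` in the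
relatively compact defect set of `φ`, the defect of the pullback is at most twice that of `b'`
plus a bound for `b'` on that set. Property (TTT) makes the pullback bounded, so `φ` takes values
in a sublevel set of `b'`, which is relatively compact by properness.
-/

noncomputable section

/-- A map is Borel measurable with respect to the Borel σ-algebras of the topologies. -/
def BorelMeasurableMap {X Y : Type*} [TopologicalSpace X] [TopologicalSpace Y] (f : X → Y) : Prop :=
  @Measurable X Y (borel X) (borel Y) f

/-- `(b, π)` is a wq-cocycle on `G`: `π` is a Borel map into the unitary group of the
complex Hilbert space `H`, `b` is Borel, locally bounded, and has finite defect. -/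
structure IsWqCocycle {G : Type*} [Group G] [TopologicalSpace G]
    {H : Type*} [NormedAddCommGroup H] [InnerProductSpace ℂ H] [CompleteSpace H]
    (b : G → H) (π : G → H ≃ₗᵢ[ℂ] H) : Prop where
  borel_b : BorelMeasurableMap b
  borel_pi : ∀ ξ : H, BorelMeasurableMap fun g => π g ξ
  loc_bdd : ∀ K : Set G, IsCompact K → ∃ C : ℝ, ∀ g ∈ K, ‖b g‖ ≤ C
  defect : ∃ D : ℝ, ∀ g h : G, ‖b (g * h) - b g - π g (b h)‖ ≤ D

/-- Property (TTT): every wq-cocycle is bounded. -/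
def HasTTT (G : Type*) [Group G] [TopologicalSpace G] : Prop :=
  ∀ (H : Type) [NormedAddCommGroup H] [InnerProductSpace ℂ H] [CompleteSpace H]
    (b : G → H) (π : G → H ≃ₗᵢ[ℂ] H),
    IsWqCocycle b π → ∃ C : ℝ, ∀ g : G, ‖b g‖ ≤ C

/-- A quasi-homomorphism between topological groups: a Borel map which is regular
(images of compact sets are relatively compact) and whose defect set
`{φ(gh)⁻¹ φ(g) φ(h)}` is relatively compact. -/
structure IsQuasiHom {G₁ G₂ : Type*} [Group G₁] [TopologicalSpace G₁]
    [Group G₂] [TopologicalSpace G₂] (φ : G₁ → G₂) : Prop where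
  borel : BorelMeasurableMap φ
  regular : ∀ K : Set G₁, IsCompact K → IsCompact (closure (φ '' K))
  defect : IsCompact (closure {x : G₂ | ∃ g h : G₁, x = (φ (g * h))⁻¹ * (φ g * φ h)})

open Set

theorem isCompact_closure_range_of_norm_comp_le {X Y E : Type*} [TopologicalSpace Y] [Norm E]
    {f : Y → E} (hf : ∀ n : ℕ, IsCompact (closure {y | ‖f y‖ ≤ (n : ℝ)}))
    {φ : X → Y} {C : ℝ} (hC : ∀ x, ‖f (φ x)‖ ≤ C) :
    IsCompact (closure (range φ)) := by
  obtain ⟨n, hn⟩ := exists_nat_ge C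
  refine (hf n).of_isClosed_subset isClosed_closure (closure_mono ?_)
  rintro _ ⟨x, rfl⟩
  exact (hC x).trans hn

theorem norm_cocycle_mul_sub_le {G R H : Type*} [Mul G] [Semiring R] [SeminormedAddCommGroup H]
    [Module R H] {b : G → H} {π : G → H ≃ₗᵢ[R] H} {D : ℝ}
    (hD : ∀ g h : G, ‖b (g * h) - b g - π g (b h)‖ ≤ D) (x y : G) :
    ‖b (x * y) - b x‖ ≤ D + ‖b y‖ :=
  calc ‖b (x * y) - b x‖ = ‖(b (x * y) - b x - π x (b y)) + π x (b y)‖ := by rw [sub_add_cancel]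
    _ ≤ ‖b (x * y) - b x - π x (b y)‖ + ‖π x (b y)‖ := norm_add_le _ _
    _ ≤ D + ‖b y‖ := by rw [LinearIsometryEquiv.norm_map]; exact add_le_add (hD x y) le_rfl

theorem IsWqCocycle.comp_quasiHom {G G' : Type*} [Group G] [TopologicalSpace G] [Group G']
    [TopologicalSpace G'] {H : Type*} [NormedAddCommGroup H] [InnerProductSpace ℂ H]
    [CompleteSpace H] {b' : G' → H} {π' : G' → H ≃ₗᵢ[ℂ] H}
    (hb' : IsWqCocycle b' π') {φ : G → G'} (hφ : IsQuasiHom φ) :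
    IsWqCocycle (b' ∘ φ) (π' ∘ φ) := by
  set S : Set G' := {x | ∃ g h : G, x = (φ (g * h))⁻¹ * (φ g * φ h)}
  obtain ⟨C, hC⟩ := hb'.loc_bdd (closure S) hφ.defect
  obtain ⟨D, hD⟩ := hb'.defect
  refine ⟨hb'.borel_b.comp hφ.borel, fun ξ => (hb'.borel_pi ξ).comp hφ.borel, ?_, ?_⟩
  · intro K hK
    obtain ⟨C, hC⟩ := hb'.loc_bdd _ (hφ.regular K hK)
    exact ⟨C, fun g hg => hC _ (subset_closure (mem_image_of_mem φ hg))⟩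
  · refine ⟨D + C + D, fun g h => ?_⟩
    set x := φ g * φ h
    set d := (φ (g * h))⁻¹ * x
    have hd : d ∈ closure S := subset_closure ⟨g, h, rfl⟩
    have hx : φ (g * h) * d = x := mul_inv_cancel_left _ _
    simp only [Function.comp_apply]
    calc ‖b' (φ (g * h)) - b' (φ g) - π' (φ g) (b' (φ h))‖
        = ‖(b' (φ (g * h)) - b' x) + (b' x - b' (φ g) - π' (φ g) (b' (φ h)))‖ := by
          congr 1; abel
      _ ≤ ‖b' (φ (g * h) * d) - b' (φ (g * h))‖ + ‖b' x - b' (φ g) - π' (φ g) (b' (φ h))‖ := by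
          rw [hx, norm_sub_rev (b' x)]; exact norm_add_le _ _
      _ ≤ (D + C) + D :=
          add_le_add ((norm_cocycle_mul_sub_le hD _ d).trans (add_le_add le_rfl (hC d hd)))
            (hD _ _)

theorem quasiHom_image_relCompact_of_TTT_of_proper_general
    (G : Type) [Group G] [TopologicalSpace G]
    (G' : Type) [Group G'] [TopologicalSpace G']
    (hG : HasTTT G)
    (hproper : ∃ (H : Type) (_ : NormedAddCommGroup H) (_ : InnerProductSpace ℂ H)
      (_ : CompleteSpace H) (b' : G' → H) (π' : G' → H ≃ₗᵢ[ℂ] H),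
      IsWqCocycle b' π' ∧ ∀ n : ℕ, IsCompact (closure {g : G' | ‖b' g‖ ≤ (n : ℝ)}))
    (φ : G → G') (hφ : IsQuasiHom φ) :
    IsCompact (closure (Set.range φ)) := by
  obtain ⟨H, _, _, _, b', π', hb', hb'_proper⟩ := hproper
  obtain ⟨C, hC⟩ := hG H _ _ (hb'.comp_quasiHom hφ)
  exact isCompact_closure_range_of_norm_comp_le hb'_proper hC

/-- Suppose `G` has property (TTT) and `G'` admits a proper wq-cocycle (one whose
sublevel sets `{g : ‖b' g‖ ≤ n}` are relatively compact). Then every quasi-homomorphism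
`φ : G → G'` has relatively compact image. -/
theorem quasiHom_image_relCompact_of_TTT_of_proper
    (G : Type) [Group G] [TopologicalSpace G] [IsTopologicalGroup G] [LocallyCompactSpace G]
    (G' : Type) [Group G'] [TopologicalSpace G'] [IsTopologicalGroup G'] [LocallyCompactSpace G']
    (hG : HasTTT G)
    (hproper : ∃ (H : Type) (_ : NormedAddCommGroup H) (_ : InnerProductSpace ℂ H)
      (_ : CompleteSpace H) (b' : G' → H) (π' : G' → H ≃ₗᵢ[ℂ] H),
      IsWqCocycle b' π' ∧ ∀ n : ℕ, IsCompact (closure {g : G' | ‖b' g‖ ≤ (n : ℝ)}))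
    (φ : G → G') (hφ : IsQuasiHom φ) :
    IsCompact (closure (Set.range φ)) :=
  quasiHom_image_relCompact_of_TTT_of_proper_general G G' hG hproper φ hφ
end
end

section
/- Let φ : G → G' be a quasi-homomorphism between locally compact groups and let (b, π) be a wq-cocycle on G'. Then (b∘φ, π∘φ) is a wq-cocycle on G; that is, b∘φ is Borel and locally bounded and sup_{g,h ∈ G} ‖b(φ(gh)) − b(φ(g)) − π(φ(g))b(φ(h))‖ < ∞. -/
/-!
Write `φ(gh) d = φ(g) φ(h)` with `d` in the relatively compact defect set of `φ`. Applying the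
almost-cocycle identity of `b` to both factorisations of this element, the defect of `b ∘ φ` at
`(g, h)` differs from that of `b` by `π(φ(gh)) b(d)`, whose norm is bounded by the bound of `b`
on the closure of the defect set.
-/

noncomputable section

open Set

section AlmostCocycle

variable {G R E : Type*} [Group G] [Semiring R] [SeminormedAddCommGroup E] [Module R E]
  {b : G → E} {π : G → E ≃ₗᵢ[R] E} {D : ℝ}

theorem norm_sub_sub_le_of_mul_eq (hD : ∀ g h, ‖b (g * h) - b g - π g (b h)‖ ≤ D)
    {x d y z : G} (hxd : x * d = y * z) : ‖b x - b y - π y (b z)‖ ≤ 2 * D + ‖b d‖ := by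
  have hsplit : b x - b y - π y (b z) =
      (b (y * z) - b y - π y (b z)) - (b (x * d) - b x - π x (b d)) - π x (b d) := by
    rw [hxd]; abel
  calc ‖b x - b y - π y (b z)‖
      ≤ ‖b (y * z) - b y - π y (b z)‖ + ‖b (x * d) - b x - π x (b d)‖ + ‖π x (b d)‖ := by
        rw [hsplit]; exact (norm_sub_le _ _).trans (add_le_add_left (norm_sub_le _ _) _)
    _ ≤ D + D + ‖b d‖ := by
        rw [(π x).norm_map]; gcongr
        · exact hD y z
        · exact hD x d
    _ = 2 * D + ‖b d‖ := by ring

end AlmostCocycle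

theorem isWqCocycle_comp_quasiHom_general
    (G : Type) [Group G] [TopologicalSpace G]
    (G' : Type) [Group G'] [TopologicalSpace G']
    (φ : G → G') (hφ : IsQuasiHom φ)
    (H : Type) [NormedAddCommGroup H] [InnerProductSpace ℂ H] [CompleteSpace H]
    (b : G' → H) (π : G' → H ≃ₗᵢ[ℂ] H) (hb : IsWqCocycle b π) :
    IsWqCocycle (b ∘ φ) (fun g => π (φ g)) := by
  obtain ⟨D, hD⟩ := hb.defect
  obtain ⟨C, hC⟩ := hb.loc_bdd _ hφ.defect
  refine ⟨hb.borel_b.comp hφ.borel, fun ξ => (hb.borel_pi ξ).comp hφ.borel,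
    fun K hK => ?_, 2 * D + C, fun g h => ?_⟩
  · obtain ⟨C', hC'⟩ := hb.loc_bdd _ (hφ.regular K hK)
    exact ⟨C', fun g hg => hC' _ (subset_closure (mem_image_of_mem φ hg))⟩
  · calc _ ≤ 2 * D + ‖b ((φ (g * h))⁻¹ * (φ g * φ h))‖ :=
          norm_sub_sub_le_of_mul_eq hD (mul_inv_cancel_left _ _)
      _ ≤ 2 * D + C := by gcongr; exact hC _ (subset_closure ⟨g, h, rfl⟩)

/-- If `φ : G → G'` is a quasi-homomorphism between locally compact groups and `(b, π)`
is a wq-cocycle on `G'`, then `(b ∘ φ, π ∘ φ)` is a wq-cocycle on `G`. -/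
theorem isWqCocycle_comp_quasiHom
    (G : Type) [Group G] [TopologicalSpace G] [IsTopologicalGroup G] [LocallyCompactSpace G]
    (G' : Type) [Group G'] [TopologicalSpace G'] [IsTopologicalGroup G'] [LocallyCompactSpace G']
    (φ : G → G') (hφ : IsQuasiHom φ)
    (H : Type) [NormedAddCommGroup H] [InnerProductSpace ℂ H] [CompleteSpace H]
    (b : G' → H) (π : G' → H ≃ₗᵢ[ℂ] H) (hb : IsWqCocycle b π) :
    IsWqCocycle (b ∘ φ) (fun g => π (φ g)) :=
  isWqCocycle_comp_quasiHom_general G G' φ hφ H b π hb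
end
end

section
/- Let G be a locally compact second countable group, Z a closed central subgroup, p : G → G/Z the quotient map, and s : G/Z → G a Borel section of p which is regular (the image of every compact set is relatively compact) and whose defect set S = {s(xy)(s(x)s(y))⁻¹ : x, y ∈ G/Z} is finite. Assume the quotient group G/Z has property (TTT). If (b, π) is a wq-cocycle on G such that b is bounded on Z, then b is bounded on all of G. -/
noncomputable section

/-!
Pull `(b, π)` back along the section: `(b ∘ s, π ∘ s)` is a wq-cocycle on `G/Z`. Its defect is
controlled because `s (x * y) = s x * s y * w` with `w ∈ Z` (both sides map to `x * y`), and `b`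
is bounded on `Z`; regularity of `s` gives local boundedness. Property (TTT) bounds `b ∘ s`, and
every `g` is `s (p g) * z` with `z ∈ Z`, so `‖b g‖ ≤ ‖b (s (p g))‖ + ‖b z‖ + defect`.
-/

section Defect

variable {G H : Type*} [Group G] [NormedAddCommGroup H] [NormedSpace ℂ H]
  {b : G → H} {π : G → H ≃ₗᵢ[ℂ] H} {D : ℝ}

theorem norm_sub_le_of_defect_le (hD : ∀ g h, ‖b (g * h) - b g - π g (b h)‖ ≤ D) (g h : G) :
    ‖b (g * h) - b g‖ ≤ D + ‖b h‖ :=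
  calc ‖b (g * h) - b g‖ = ‖(b (g * h) - b g - π g (b h)) + π g (b h)‖ := by
        rw [sub_add_cancel]
    _ ≤ ‖b (g * h) - b g - π g (b h)‖ + ‖π g (b h)‖ := norm_add_le _ _
    _ ≤ D + ‖b h‖ := by rw [LinearIsometryEquiv.norm_map]; gcongr; exact hD g h

theorem norm_mul_le_of_defect_le (hD : ∀ g h, ‖b (g * h) - b g - π g (b h)‖ ≤ D) (g h : G) :
    ‖b (g * h)‖ ≤ ‖b g‖ + ‖b h‖ + D :=
  calc ‖b (g * h)‖ ≤ ‖b (g * h) - b g‖ + ‖b g‖ := norm_le_norm_sub_add _ _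
    _ ≤ ‖b g‖ + ‖b h‖ + D := by linarith [norm_sub_le_of_defect_le hD g h]

theorem norm_comp_defect_le {Q : Type*} [Mul Q] {Z : Subgroup G} {C : ℝ} (hbZ : ∀ z ∈ Z, ‖b z‖ ≤ C)
    (hD : ∀ g h, ‖b (g * h) - b g - π g (b h)‖ ≤ D) {s : Q → G}
    (hs : ∀ x y, (s x * s y)⁻¹ * s (x * y) ∈ Z) (x y : Q) :
    ‖b (s (x * y)) - b (s x) - π (s x) (b (s y))‖ ≤ D + C + D := by
  set w := (s x * s y)⁻¹ * s (x * y)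
  have hw : s (x * y) = s x * s y * w := (mul_inv_cancel_left _ _).symm
  calc ‖b (s (x * y)) - b (s x) - π (s x) (b (s y))‖
        = ‖(b (s x * s y * w) - b (s x * s y)) + (b (s x * s y) - b (s x) - π (s x) (b (s y)))‖ := by
          rw [hw]; abel_nf
    _ ≤ ‖b (s x * s y * w) - b (s x * s y)‖ + ‖b (s x * s y) - b (s x) - π (s x) (b (s y))‖ :=
          norm_add_le _ _
    _ ≤ D + C + D := by
          gcongr
          · linarith [norm_sub_le_of_defect_le hD (s x * s y) w, hbZ w (hs x y)]
          · exact hD _ _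

end Defect

section QuotientSection

variable {G : Type*} [Group G] {Z : Subgroup G} [Z.Normal] {s : G ⧸ Z → G}

theorem inv_mul_section_mem (hs_sect : ∀ x : G ⧸ Z, (QuotientGroup.mk (s x) : G ⧸ Z) = x)
    (x y : G ⧸ Z) : (s x * s y)⁻¹ * s (x * y) ∈ Z := by
  rw [← QuotientGroup.eq, QuotientGroup.mk_mul, hs_sect, hs_sect, hs_sect]

theorem IsWqCocycle.comp_section [TopologicalSpace G]
    {H : Type*} [NormedAddCommGroup H] [InnerProductSpace ℂ H] [CompleteSpace H]
    {b : G → H} {π : G → H ≃ₗᵢ[ℂ] H} (hb : IsWqCocycle b π) {C : ℝ}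
    (hbZ : ∀ z ∈ Z, ‖b z‖ ≤ C) (hs_borel : BorelMeasurableMap s)
    (hs_sect : ∀ x : G ⧸ Z, (QuotientGroup.mk (s x) : G ⧸ Z) = x)
    (hs_reg : ∀ K : Set (G ⧸ Z), IsCompact K → IsCompact (closure (s '' K))) :
    IsWqCocycle (b ∘ s) (π ∘ s) where
  borel_b := hb.borel_b.comp hs_borel
  borel_pi ξ := (hb.borel_pi ξ).comp hs_borel
  loc_bdd K hK := by
    obtain ⟨C', hC'⟩ := hb.loc_bdd _ (hs_reg K hK)
    exact ⟨C', fun x hx => hC' _ (subset_closure (Set.mem_image_of_mem s hx))⟩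
  defect := by
    obtain ⟨D, hD⟩ := hb.defect
    exact ⟨D + C + D, norm_comp_defect_le hbZ hD (inv_mul_section_mem hs_sect)⟩

end QuotientSection

theorem bounded_of_bounded_on_center_general
    (G : Type) [Group G] [TopologicalSpace G]
    (Z : Subgroup G) [Z.Normal]
    (s : G ⧸ Z → G)
    (hs_borel : BorelMeasurableMap s)
    (hs_sect : ∀ x : G ⧸ Z, (QuotientGroup.mk (s x) : G ⧸ Z) = x)
    (hs_reg : ∀ K : Set (G ⧸ Z), IsCompact K → IsCompact (closure (s '' K)))
    (hTTT : HasTTT (G ⧸ Z))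
    (H : Type) [NormedAddCommGroup H] [InnerProductSpace ℂ H] [CompleteSpace H]
    (b : G → H) (π : G → H ≃ₗᵢ[ℂ] H) (hb : IsWqCocycle b π)
    (hbZ : ∃ C : ℝ, ∀ z ∈ Z, ‖b z‖ ≤ C) :
    ∃ C : ℝ, ∀ g : G, ‖b g‖ ≤ C := by
  obtain ⟨CZ, hCZ⟩ := hbZ
  obtain ⟨D, hD⟩ := hb.defect
  obtain ⟨CQ, hCQ⟩ := hTTT H _ _ (hb.comp_section hCZ hs_borel hs_sect hs_reg)
  refine ⟨CQ + CZ + D, fun g => ?_⟩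
  set x : G ⧸ Z := QuotientGroup.mk g
  have hz : (s x)⁻¹ * g ∈ Z := QuotientGroup.eq.mp (hs_sect x)
  calc ‖b g‖ = ‖b (s x * ((s x)⁻¹ * g))‖ := by rw [mul_inv_cancel_left]
    _ ≤ ‖b (s x)‖ + ‖b ((s x)⁻¹ * g)‖ + D := norm_mul_le_of_defect_le hD _ _
    _ ≤ CQ + CZ + D := by gcongr; exacts [hCQ x, hCZ _ hz]

/-- Let `G` be a locally compact second countable group, `Z` a closed central subgroup,
and `s : G/Z → G` a regular Borel section of the quotient map with finite defect set
`S = {s(xy)(s(x)s(y))⁻¹}`. If `G/Z` has property (TTT) and `(b, π)` is a wq-cocycle on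
`G` with `b` bounded on `Z`, then `b` is bounded on all of `G`. -/
theorem bounded_of_bounded_on_center
    (G : Type) [Group G] [TopologicalSpace G] [IsTopologicalGroup G] [T2Space G]
    [LocallyCompactSpace G] [SecondCountableTopology G]
    (Z : Subgroup G) [Z.Normal] (hcentral : Z ≤ Subgroup.center G)
    (hclosed : IsClosed (Z : Set G))
    (s : G ⧸ Z → G)
    (hs_borel : BorelMeasurableMap s)
    (hs_sect : ∀ x : G ⧸ Z, (QuotientGroup.mk (s x) : G ⧸ Z) = x)
    (hs_reg : ∀ K : Set (G ⧸ Z), IsCompact K → IsCompact (closure (s '' K)))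
    (hS : Set.Finite {w : G | ∃ x y : G ⧸ Z, w = s (x * y) * (s x * s y)⁻¹})
    (hTTT : HasTTT (G ⧸ Z))
    (H : Type) [NormedAddCommGroup H] [InnerProductSpace ℂ H] [CompleteSpace H]
    (b : G → H) (π : G → H ≃ₗᵢ[ℂ] H) (hb : IsWqCocycle b π)
    (hbZ : ∃ C : ℝ, ∀ z ∈ Z, ‖b z‖ ≤ C) :
    ∃ C : ℝ, ∀ g : G, ‖b g‖ ≤ C :=
  bounded_of_bounded_on_center_general G Z s hs_borel hs_sect hs_reg hTTT H b π hb hbZ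
end
end
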